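/- Let b ∈ L¹(ℝ, [0,∞)) be a weakly sub-exponential function on ℝ such that b(s+τ) ≤ K b(s) for s > ρ, τ > 0. Then for every n ≥ 2, lim_{s→∞} b^{∗n}(s)/b(s) = n (∫_ℝ b(τ) dτ)^{n−1}. -/

import Mathlib

open Filter MeasureTheory

noncomputable def conv1 (f g : ℝ → ℝ) : ℝ → ℝ := fun s => ∫ τ, f (s - τ) * g τ

/-- `nconv1 f n = f^{*(n+1)}`, the (n+1)-fold convolution of `f`. -/
noncomputable def nconv1 (f : ℝ → ℝ) : ℕ → ℝ → ℝ
  | 0 => f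
  | n + 1 => conv1 f (nconv1 f n)

/-- A function is (right-side) long-tailed. -/
def LongTailed (b : ℝ → ℝ) : Prop :=
  (∃ ρ ≥ (0:ℝ), ∀ s ≥ ρ, 0 < b s) ∧
    ∀ τ ≥ (0:ℝ), Tendsto (fun s => b (s + τ) / b s) atTop (nhds 1)

/-- The normalized restriction of `b` to `ℝ₊`. -/
noncomputable def bplus (b : ℝ → ℝ) : ℝ → ℝ :=
  fun s => Set.indicator (Set.Ici (0:ℝ)) b s / ∫ τ in Set.Ici (0:ℝ), b τ

/-- `b` is weakly (right-side) sub-exponential on `ℝ`. -/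
def WeaklySubexp (b : ℝ → ℝ) : Prop :=
  LongTailed b ∧ IntegrableOn b (Set.Ici 0) ∧
    Tendsto (fun s => conv1 (bplus b) (bplus b) s / bplus b s) atTop (nhds 2)

/-!
Split `(b ∗ g)(s) = ∫ b (s - τ) g τ dτ` at `τ = A` and `τ = s - A`. Writing
`s - τ = (s - A) + (A - τ)`, quasi-monotonicity and long-tailedness give `b (s - τ) ≤ 2 K b s`
uniformly in `τ ≤ A` for large `s`, so by dominated convergence the two outer pieces, divided
by `b s`, tend to `∫_{τ < A} g` and `L ∫_{u < A} b` whenever `g / b → L`. On the middle piece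
`|g| ≤ c b`, and the same decomposition applied to `∫_0^s b (s - τ) b τ dτ ~ 2 b s ∫_0^∞ b`
(weak sub-exponentiality) shows that `∫_A^{s-A} b (s - τ) b τ dτ ~ 2 b s ∫_A^∞ b`, which is small
for large `A`. Hence `(b ∗ g) / b → ∫ g + L ∫ b`, and induction on `n` gives the theorem.
-/

open Set Topology
open scoped Convolution

lemma tendsto_of_forall_exists_dist_lt {ι α : Type*} [PseudoMetricSpace α] {l : Filter ι}
    {f : ι → α} {a : α} (h : ∀ ε > 0, ∃ y, dist y a < ε ∧ ∀ᶠ x in l, dist (f x) y < ε) :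
    Tendsto f l (𝓝 a) := by
  refine Metric.tendsto_nhds.2 fun ε hε => ?_
  obtain ⟨y, hya, hy⟩ := h (ε / 2) (half_pos hε)
  filter_upwards [hy] with x hx
  linarith [dist_triangle (f x) y a]

lemma eventually_abs_le_mul_of_tendsto_div {ι : Type*} {l : Filter ι} {f g : ι → ℝ} {c : ℝ}
    (hg : ∀ᶠ x in l, 0 < g x) (h : Tendsto (fun x => f x / g x) l (𝓝 c)) :
    ∀ᶠ x in l, |f x| ≤ (|c| + 1) * g x := by
  filter_upwards [hg, h.abs.eventually_lt_const (lt_add_one |c|)] with x hgx hx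
  rw [abs_div, abs_of_pos hgx, div_lt_iff₀ hgx] at hx
  exact hx.le

lemma tendsto_setIntegral_Iio_atTop {f : ℝ → ℝ} (hf : Integrable f) :
    Tendsto (fun A => ∫ τ in Iio A, f τ) atTop (𝓝 (∫ τ, f τ)) :=
  (aecover_Iio tendsto_id).integral_tendsto_of_countably_generated hf

lemma integral_eq_Iio_add_Icc_add_Ioi {f : ℝ → ℝ} {μ : Measure ℝ} (hf : Integrable f μ)
    {a b : ℝ} (hab : a ≤ b) :
    ∫ τ, f τ ∂μ = (∫ τ in Iio a, f τ ∂μ) + (∫ τ in Icc a b, f τ ∂μ) + ∫ τ in Ioi b, f τ ∂μ := by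
  rw [← setIntegral_union (Iio_disjoint_Ici le_rfl |>.mono_right Icc_subset_Ici_self)
      measurableSet_Icc hf.integrableOn hf.integrableOn, Iio_union_Icc_eq_Iic hab,
    intervalIntegral.integral_Iic_add_Ioi hf.integrableOn hf.integrableOn]

lemma setIntegral_Icc_eq_Ico_add_Icc_add_Ioc {f : ℝ → ℝ} {μ : Measure ℝ} {a b c d : ℝ}
    (hab : a ≤ b) (hbc : b ≤ c) (hcd : c ≤ d) (hf : IntegrableOn f (Icc a d) μ) :
    ∫ τ in Icc a d, f τ ∂μ
      = (∫ τ in Ico a b, f τ ∂μ) + (∫ τ in Icc b c, f τ ∂μ) + ∫ τ in Ioc c d, f τ ∂μ := by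
  have hac : IntegrableOn f (Icc a c) μ := hf.mono_set (Icc_subset_Icc_right hcd)
  rw [← setIntegral_union (s := Ico a b) (t := Icc b c)
      (Iio_disjoint_Ici le_rfl |>.mono Ico_subset_Iio_self Icc_subset_Ici_self) measurableSet_Icc
      (hac.mono_set (Ico_subset_Icc_self.trans (Icc_subset_Icc_right hbc)))
      (hac.mono_set (Icc_subset_Icc_left hab)),
    Ico_union_Icc_eq_Icc hab hbc,
    ← setIntegral_union (s := Icc a c) (t := Ioc c d)
      (Iic_disjoint_Ioi le_rfl |>.mono Icc_subset_Iic_self Ioc_subset_Ioi_self) measurableSet_Ioc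
      hac (hf.mono_set (Ioc_subset_Icc_self.trans (Icc_subset_Icc_left (hab.trans hbc)))),
    Icc_union_Ioc_eq_Icc (hab.trans hbc) hcd]

lemma setIntegral_preimage_sub_left (f g : ℝ → ℝ) (s : ℝ) (T : Set ℝ) :
    ∫ τ in (s - ·) ⁻¹' T, f (s - τ) * g τ = ∫ u in T, f u * g (s - u) := by
  simpa only [sub_sub_cancel] using
    (Measure.measurePreserving_sub_left volume s).setIntegral_preimage_emb
      (MeasurableEquiv.subLeft s).measurableEmbedding (fun u => f u * g (s - u)) T

lemma LongTailed.tendsto_comp_sub_div {b : ℝ → ℝ} (hb : LongTailed b) (τ : ℝ) :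
    Tendsto (fun s => b (s - τ) / b s) atTop (𝓝 1) := by
  rcases le_or_gt τ 0 with hτ | hτ
  · simpa [sub_eq_add_neg] using hb.2 (-τ) (neg_nonneg.2 hτ)
  · have h := (hb.2 τ hτ.le).comp (tendsto_atTop_add_const_right atTop (-τ) tendsto_id)
    simpa [Function.comp_def, ← sub_eq_add_neg, inv_div] using h.inv₀ one_ne_zero

lemma conv1_bplus_self (b : ℝ → ℝ) (s : ℝ) :
    conv1 (bplus b) (bplus b) s
      = (∫ τ in Icc 0 s, b (s - τ) * b τ) / (∫ τ in Ici 0, b τ) ^ 2 := by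
  have hind : ∀ τ, (Ici (0:ℝ)).indicator b (s - τ) * (Ici 0).indicator b τ
      = (Icc 0 s).indicator (fun τ => b (s - τ) * b τ) τ := by
    intro τ
    rw [← Ici_inter_Iic, inter_comm, inter_indicator_mul]
    congr 1
    simp [indicator, sub_nonneg]
  simp only [conv1, bplus, div_mul_div_comm, hind, integral_div, ← sq,
    integral_indicator measurableSet_Icc]

lemma conv1_eq_convolution (f g : ℝ → ℝ) :
    conv1 f g = g ⋆[ContinuousLinearMap.mul ℝ ℝ, volume] f := by
  ext s
  simp only [conv1, convolution_def, ContinuousLinearMap.mul_apply', mul_comm]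

lemma integrable_nconv1 {f : ℝ → ℝ} (hf : Integrable f) (n : ℕ) : Integrable (nconv1 f n) := by
  induction n with
  | zero => exact hf
  | succ n ih =>
    rw [nconv1, conv1_eq_convolution]
    exact ih.integrable_convolution _ hf

lemma integral_nconv1 {f : ℝ → ℝ} (hf : Integrable f) (n : ℕ) :
    ∫ s, nconv1 f n s = (∫ s, f s) ^ (n + 1) := by
  induction n with
  | zero => simp [nconv1]
  | succ n ih =>
    rw [nconv1, conv1_eq_convolution, integral_convolution _ (integrable_nconv1 hf n) hf, ih]
    simp [pow_succ]

lemma WeaklySubexp.tendsto_setIntegral_Icc_div {b : ℝ → ℝ} (hb : WeaklySubexp b) :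
    Tendsto (fun s => (∫ τ in Icc 0 s, b (s - τ) * b τ) / b s) atTop
      (𝓝 (2 * ∫ τ in Ici 0, b τ)) := by
  obtain ⟨⟨⟨ρ, hρ, hpos⟩, -⟩, -, hconv⟩ := hb
  have hI : (∫ τ in Ici 0, b τ) ≠ 0 := by
    intro hI
    -- then `bplus b = 0` (division by zero), so the ratio would be constantly `0`
    have hzero : (fun s => conv1 (bplus b) (bplus b) s / bplus b s) = fun _ => 0 := by
      funext s
      simp [bplus, hI]
    rw [hzero] at hconv
    exact two_ne_zero (tendsto_nhds_unique hconv tendsto_const_nhds)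
  rw [mul_comm]
  refine (hconv.const_mul _).congr' ?_
  filter_upwards [eventually_ge_atTop ρ] with s hs
  have := hpos s hs
  rw [conv1_bplus_self, bplus, indicator_of_mem (mem_Ici.2 (hρ.trans hs))]
  field_simp

structure IsQuasiMonotoneSubexp (b : ℝ → ℝ) (K R : ℝ) : Prop where
  nonneg : ∀ s, 0 ≤ b s
  integrable : Integrable b
  weaklySubexp : WeaklySubexp b
  pos : ∀ s, R ≤ s → 0 < b s
  quasiMono : ∀ s, R ≤ s → ∀ τ, 0 ≤ τ → b (s + τ) ≤ K * b s

namespace IsQuasiMonotoneSubexp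

variable {b : ℝ → ℝ} {K R : ℝ}

lemma one_le_const (h : IsQuasiMonotoneSubexp b K R) : 1 ≤ K :=
  one_le_of_le_mul_right₀ (h.pos R le_rfl) (by simpa using h.quasiMono R le_rfl 0 le_rfl)

lemma le_const_mul (h : IsQuasiMonotoneSubexp b K R) {x : ℝ} (hx : R ≤ x) : b x ≤ K * b R := by
  simpa using h.quasiMono R le_rfl (x - R) (sub_nonneg.2 hx)

lemma eventually_pos (h : IsQuasiMonotoneSubexp b K R) : ∀ᶠ s in atTop, 0 < b s :=
  eventually_atTop.2 ⟨R, h.pos⟩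

lemma tendsto_comp_sub_div (h : IsQuasiMonotoneSubexp b K R) (τ : ℝ) :
    Tendsto (fun s => b (s - τ) / b s) atTop (𝓝 1) :=
  h.weaklySubexp.1.tendsto_comp_sub_div τ

lemma tendsto_div_self (h : IsQuasiMonotoneSubexp b K R) :
    Tendsto (fun s => b s / b s) atTop (𝓝 1) :=
  tendsto_const_nhds.congr' (h.eventually_pos.mono fun _ hs => (div_self hs.ne').symm)

lemma eventually_comp_sub_le (h : IsQuasiMonotoneSubexp b K R) (A : ℝ) :
    ∀ᶠ s in atTop, ∀ τ ≤ A, b (s - τ) ≤ 2 * K * b s := by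
  have hK : 0 ≤ K := zero_le_one.trans h.one_le_const
  filter_upwards [eventually_ge_atTop (R + max A 0),
    (h.tendsto_comp_sub_div (max A 0)).eventually_lt_const one_lt_two] with s hs hA τ hτ
  have hbs := h.pos s (by linarith [le_max_right A 0])
  have hshift : s - τ = (s - max A 0) + (max A 0 - τ) := by ring
  rw [div_lt_iff₀ hbs] at hA
  calc b (s - τ) ≤ K * b (s - max A 0) := by
        rw [hshift]
        exact h.quasiMono _ (by linarith) _ (by linarith [le_max_left A 0])
    _ ≤ K * (2 * b s) := by gcongr
    _ = 2 * K * b s := by ring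

lemma integrable_comp_sub_mul (h : IsQuasiMonotoneSubexp b K R) {g : ℝ → ℝ}
    (hg : Integrable g) {L : ℝ} (hgL : Tendsto (fun t => g t / b t) atTop (𝓝 L)) :
    ∀ᶠ s in atTop, Integrable (fun τ => b (s - τ) * g τ) := by
  obtain ⟨T₀, hT₀⟩ :=
    eventually_atTop.1 (eventually_abs_le_mul_of_tendsto_div h.eventually_pos hgL)
  set c := |L| + 1
  set M := K * b R
  filter_upwards [eventually_ge_atTop (2 * max R T₀)] with s hs
  have hR := le_max_left R T₀
  have hT := le_max_right R T₀
  -- `b ≤ M` on `[R, ∞)`, and one of `s - τ`, `τ` is at least `s / 2 ≥ max R T₀`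
  refine Integrable.mono' ((hg.abs.const_mul M).add ((h.integrable.comp_sub_left s).const_mul
    (c * M))) (h.integrable.1.convolution_integrand_swap_snd (ContinuousLinearMap.mul ℝ ℝ)
    hg.1 s) (Eventually.of_forall fun τ => ?_)
  have hc : 0 ≤ c := by positivity
  have hM : 0 ≤ M := (h.nonneg _).trans (h.le_const_mul le_rfl)
  have hgτ := abs_nonneg (g τ)
  have hbsτ := h.nonneg (s - τ)
  rw [norm_mul, Real.norm_of_nonneg hbsτ, Real.norm_eq_abs, Pi.add_apply]
  rcases le_or_gt τ (s / 2) with hτ | hτ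
  · have := h.le_const_mul (x := s - τ) (by linarith)
    nlinarith [mul_nonneg (mul_nonneg hc hM) hbsτ]
  · have hgM : |g τ| ≤ c * M := (hT₀ τ (by linarith)).trans
      (mul_le_mul_of_nonneg_left (h.le_const_mul (by linarith)) hc)
    nlinarith

lemma tendsto_setIntegral_comp_sub_mul_div (h : IsQuasiMonotoneSubexp b K R) {g : ℝ → ℝ}
    (hg : Integrable g) {A : ℝ} {T : Set ℝ} (hT : MeasurableSet T) (hTA : T ⊆ Iic A) :
    Tendsto (fun s => (∫ τ in T, b (s - τ) * g τ) / b s) atTop (𝓝 (∫ τ in T, g τ)) := by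
  simp_rw [← integral_div]
  refine tendsto_integral_filter_of_dominated_convergence (fun τ => 2 * K * |g τ|)
    (Eventually.of_forall fun s =>
      (((h.integrable.comp_sub_left s).1.mul hg.1).mul_const (b s)⁻¹).restrict) ?_
    (hg.abs.const_mul _).integrableOn (Eventually.of_forall fun τ => ?_)
  · filter_upwards [h.eventually_pos, h.eventually_comp_sub_le A] with s hs hle
    refine (ae_restrict_iff' hT).2 (Eventually.of_forall fun τ hτ => ?_)
    rw [norm_div, norm_mul, Real.norm_of_nonneg (h.nonneg _), Real.norm_of_nonneg hs.le,
      div_le_iff₀ hs, Real.norm_eq_abs, mul_right_comm]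
    exact mul_le_mul_of_nonneg_right (hle τ (hTA hτ)) (abs_nonneg _)
  · simpa [mul_div_right_comm] using (h.tendsto_comp_sub_div τ).mul_const (g τ)

lemma tendsto_setIntegral_mul_comp_sub_div (h : IsQuasiMonotoneSubexp b K R) {g : ℝ → ℝ}
    (hg : AEStronglyMeasurable g) {L : ℝ} (hgL : Tendsto (fun t => g t / b t) atTop (𝓝 L))
    {A : ℝ} {T : Set ℝ} (hT : MeasurableSet T) (hTA : T ⊆ Iic A) :
    Tendsto (fun s => (∫ u in T, b u * g (s - u)) / b s) atTop (𝓝 (L * ∫ u in T, b u)) := by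
  obtain ⟨T₀, hT₀⟩ :=
    eventually_atTop.1 (eventually_abs_le_mul_of_tendsto_div h.eventually_pos hgL)
  simp_rw [← integral_div, ← integral_const_mul]
  refine tendsto_integral_filter_of_dominated_convergence (fun u => (|L| + 1) * (2 * K) * b u)
    (Eventually.of_forall fun s => ((h.integrable.1.convolution_integrand_snd
      (ContinuousLinearMap.mul ℝ ℝ) hg s).mul_const (b s)⁻¹).restrict) ?_
    (h.integrable.const_mul _).integrableOn (Eventually.of_forall fun u => ?_)
  · filter_upwards [h.eventually_pos, h.eventually_comp_sub_le A,
      eventually_ge_atTop (T₀ + A)] with s hs hle hsA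
    refine (ae_restrict_iff' hT).2 (Eventually.of_forall fun u hu => ?_)
    have hu : u ≤ A := hTA hu
    rw [norm_div, norm_mul, Real.norm_of_nonneg (h.nonneg _), Real.norm_of_nonneg hs.le,
      div_le_iff₀ hs, Real.norm_eq_abs]
    calc b u * |g (s - u)| ≤ b u * ((|L| + 1) * (2 * K * b s)) := by
          refine mul_le_mul_of_nonneg_left ((hT₀ _ (by linarith)).trans ?_) (h.nonneg u)
          exact mul_le_mul_of_nonneg_left (hle u hu) (by positivity)
      _ = (|L| + 1) * (2 * K) * b u * b s := by ring
  · have hshift := (hgL.comp (tendsto_atTop_add_const_right atTop (-u) tendsto_id)).mul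
      (h.tendsto_comp_sub_div u)
    rw [mul_one] at hshift
    rw [mul_comm L]
    refine (hshift.const_mul (b u)).congr' ?_
    filter_upwards [eventually_ge_atTop (R + u)] with s hs
    have := h.pos (s - u) (by linarith)
    simp only [Function.comp_apply, id, ← sub_eq_add_neg]
    field_simp

lemma preimage_sub_left_Ico (s a b : ℝ) : (s - ·) ⁻¹' Ico a b = Ioc (s - b) (s - a) := by
  ext x
  simp only [mem_preimage, mem_Ico, mem_Ioc]
  constructor <;> rintro ⟨h₁, h₂⟩ <;> constructor <;> linarith

lemma preimage_sub_left_Iio (s a : ℝ) : (s - ·) ⁻¹' Iio a = Ioi (s - a) := by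
  ext x
  simp only [mem_preimage, mem_Iio, mem_Ioi]
  constructor <;> intro h <;> linarith

lemma tendsto_setIntegral_Icc_self_div (h : IsQuasiMonotoneSubexp b K R) {A : ℝ} (hA : 0 ≤ A) :
    Tendsto (fun s => (∫ τ in Icc A (s - A), b (s - τ) * b τ) / b s) atTop
      (𝓝 (2 * ∫ τ in Ici A, b τ)) := by
  have hleft := h.tendsto_setIntegral_comp_sub_mul_div h.integrable measurableSet_Ico
    (Ico_subset_Iio_self.trans Iio_subset_Iic_self : Ico 0 A ⊆ Iic A)
  have hright := h.tendsto_setIntegral_mul_comp_sub_div h.integrable.1 h.tendsto_div_self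
    measurableSet_Ico (Ico_subset_Iio_self.trans Iio_subset_Iic_self : Ico 0 A ⊆ Iic A)
  have hsplit : ∀ᶠ s in atTop, ∫ τ in Icc 0 s, b (s - τ) * b τ
      = (∫ τ in Ico 0 A, b (s - τ) * b τ) + (∫ τ in Icc A (s - A), b (s - τ) * b τ)
        + ∫ u in Ico 0 A, b u * b (s - u) := by
    filter_upwards [h.integrable_comp_sub_mul h.integrable h.tendsto_div_self,
      eventually_ge_atTop (2 * A)] with s hint hs
    rw [setIntegral_Icc_eq_Ico_add_Icc_add_Ioc (c := s - A) hA (by linarith) (by linarith)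
      hint.integrableOn, ← setIntegral_preimage_sub_left, preimage_sub_left_Ico, sub_zero]
  have hI : ∫ τ in Ici 0, b τ = (∫ τ in Ico 0 A, b τ) + ∫ τ in Ici A, b τ := by
    rw [← setIntegral_union ((Iio_disjoint_Ici le_rfl).mono_left Ico_subset_Iio_self)
      measurableSet_Ici h.integrable.integrableOn h.integrable.integrableOn,
      Ico_union_Ici_eq_Ici hA]
  have hlim := (h.weaklySubexp.tendsto_setIntegral_Icc_div.sub hleft).sub hright
  rw [hI, show ∀ x y : ℝ, 2 * (x + y) - x - 1 * x = 2 * y by intros; ring] at hlim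
  refine hlim.congr' ?_
  filter_upwards [hsplit] with s hs
  rw [hs]
  ring

lemma tendsto_setIntegral_Iio_add_Ioi_div (h : IsQuasiMonotoneSubexp b K R) {g : ℝ → ℝ}
    (hg : Integrable g) {L : ℝ} (hgL : Tendsto (fun t => g t / b t) atTop (𝓝 L)) (A : ℝ) :
    Tendsto (fun s => ((∫ τ in Iio A, b (s - τ) * g τ) + ∫ τ in Ioi (s - A), b (s - τ) * g τ)
      / b s) atTop (𝓝 ((∫ τ in Iio A, g τ) + L * ∫ τ in Iio A, b τ)) := by
  simp_rw [add_div, ← preimage_sub_left_Iio, setIntegral_preimage_sub_left]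
  exact (h.tendsto_setIntegral_comp_sub_mul_div hg measurableSet_Iio Iio_subset_Iic_self).add
    (h.tendsto_setIntegral_mul_comp_sub_div hg.1 hgL measurableSet_Iio Iio_subset_Iic_self)

lemma abs_setIntegral_comp_sub_mul_le (h : IsQuasiMonotoneSubexp b K R) {g : ℝ → ℝ}
    {c T₀ : ℝ} (hdom : ∀ t, T₀ ≤ t → |g t| ≤ c * b t) {s a a' : ℝ} (ha : T₀ ≤ a)
    (hg : Integrable (fun τ => b (s - τ) * g τ)) (hb : Integrable (fun τ => b (s - τ) * b τ)) :
    |∫ τ in Icc a a', b (s - τ) * g τ| ≤ c * ∫ τ in Icc a a', b (s - τ) * b τ := by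
  rw [← integral_const_mul]
  refine (abs_integral_le_integral_abs).trans (setIntegral_mono_on hg.abs.integrableOn
    (hb.const_mul c).integrableOn measurableSet_Icc fun τ hτ => ?_)
  rw [abs_mul, abs_of_nonneg (h.nonneg _), mul_left_comm]
  exact mul_le_mul_of_nonneg_left (hdom τ (ha.trans hτ.1)) (h.nonneg _)

theorem tendsto_conv1_div (h : IsQuasiMonotoneSubexp b K R) {g : ℝ → ℝ} (hg : Integrable g)
    {L : ℝ} (hgL : Tendsto (fun t => g t / b t) atTop (𝓝 L)) :
    Tendsto (fun s => conv1 b g s / b s) atTop (𝓝 ((∫ τ, g τ) + L * ∫ τ, b τ)) := by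
  obtain ⟨T₀, hT₀⟩ :=
    eventually_atTop.1 (eventually_abs_le_mul_of_tendsto_div h.eventually_pos hgL)
  have happrox : Tendsto (fun A => (∫ τ in Iio A, g τ) + L * ∫ τ in Iio A, b τ) atTop
      (𝓝 ((∫ τ, g τ) + L * ∫ τ, b τ)) :=
    (tendsto_setIntegral_Iio_atTop hg).add
      ((tendsto_setIntegral_Iio_atTop h.integrable).const_mul L)
  have htail : Tendsto (fun A => (|L| + 1) * (2 * ∫ τ in Ici A, b τ)) atTop (𝓝 0) := by
    simpa using ((tendsto_integral_Ici_zero tendsto_id).const_mul 2).const_mul (|L| + 1)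
  refine tendsto_of_forall_exists_dist_lt fun ε hε => ?_
  obtain ⟨A, hA0, hAT, hAε, htailε⟩ := ((eventually_ge_atTop 0).and ((eventually_ge_atTop T₀).and
    ((Metric.tendsto_nhds.1 happrox ε hε).and (htail.eventually_lt_const (half_pos hε))))).exists
  refine ⟨_, hAε, ?_⟩
  filter_upwards [Metric.tendsto_nhds.1 (h.tendsto_setIntegral_Iio_add_Ioi_div hg hgL A) _
      (half_pos hε), ((h.tendsto_setIntegral_Icc_self_div hA0).const_mul _).eventually_lt_const
      htailε, h.integrable_comp_sub_mul hg hgL,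
      h.integrable_comp_sub_mul h.integrable h.tendsto_div_self, h.eventually_pos,
      eventually_ge_atTop (2 * A)] with s hout hmid hig hib hbs hs
  have hmid' := h.abs_setIntegral_comp_sub_mul_le hT₀ (a' := s - A) hAT hig hib
  rw [Real.dist_eq] at hout ⊢
  rw [conv1, integral_eq_Iio_add_Icc_add_Ioi hig (by linarith : A ≤ s - A)]
  calc _ = |(((∫ τ in Iio A, b (s - τ) * g τ) + ∫ τ in Ioi (s - A), b (s - τ) * g τ) / b s
          - ((∫ τ in Iio A, g τ) + L * ∫ τ in Iio A, b τ))
          + (∫ τ in Icc A (s - A), b (s - τ) * g τ) / b s| := by ring_nf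
    _ ≤ _ := abs_add_le _ _
    _ < ε / 2 + ε / 2 := by
      refine add_lt_add hout ?_
      rw [abs_div, abs_of_pos hbs, div_lt_iff₀ hbs]
      rw [← mul_div_assoc, div_lt_iff₀ hbs] at hmid
      linarith
    _ = ε := add_halves ε

theorem tendsto_nconv1_div (h : IsQuasiMonotoneSubexp b K R) (n : ℕ) :
    Tendsto (fun s => nconv1 b n s / b s) atTop (𝓝 ((n + 1) * (∫ τ, b τ) ^ n)) := by
  induction n with
  | zero => simpa [nconv1] using h.tendsto_div_self
  | succ n ih =>
    have hval : ((↑(n + 1) : ℝ) + 1) * (∫ τ, b τ) ^ (n + 1)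
        = (∫ τ, nconv1 b n τ) + (n + 1) * (∫ τ, b τ) ^ n * ∫ τ, b τ := by
      rw [integral_nconv1 h.integrable]
      push_cast
      ring
    rw [hval]
    exact h.tendsto_conv1_div (integrable_nconv1 h.integrable n) ih

end IsQuasiMonotoneSubexp

theorem stmt_7_general (b : ℝ → ℝ) (hnn : ∀ s, 0 ≤ b s) (hint : Integrable b)
    (hb : WeaklySubexp b)
    (K ρ : ℝ)
    (hquasi : ∀ s > ρ, ∀ τ > (0:ℝ), b (s + τ) ≤ K * b s) :
    ∀ n : ℕ, 2 ≤ n →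
      Tendsto (fun s => nconv1 b (n - 1) s / b s) atTop
        (nhds ((n : ℝ) * (∫ τ, b τ) ^ (n - 1))) := by
  obtain ⟨ρ₀, -, hpos⟩ := hb.1.1
  have h : IsQuasiMonotoneSubexp b (max K 1) (max (ρ + 1) ρ₀) := by
    refine ⟨hnn, hint, hb, fun s hs => hpos s (le_of_max_le_right hs), fun s hs τ hτ => ?_⟩
    rcases hτ.eq_or_lt with rfl | hτ
    · simpa using le_mul_of_one_le_left (hnn s) (le_max_right K 1)
    · exact (hquasi s (by linarith [le_of_max_le_left hs]) τ hτ).trans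
        (mul_le_mul_of_nonneg_right (le_max_left K 1) (hnn s))
  intro n hn
  obtain ⟨m, rfl⟩ : ∃ m, n = m + 1 := ⟨n - 1, by omega⟩
  simpa using h.tendsto_nconv1_div m

theorem stmt_7 (b : ℝ → ℝ) (hnn : ∀ s, 0 ≤ b s) (hint : Integrable b)
    (hb : WeaklySubexp b)
    (K ρ : ℝ) (hK : 0 < K) (hρ : 0 < ρ)
    (hquasi : ∀ s > ρ, ∀ τ > (0:ℝ), b (s + τ) ≤ K * b s) :
    ∀ n : ℕ, 2 ≤ n →
      Tendsto (fun s => nconv1 b (n - 1) s / b s) atTop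
        (nhds ((n : ℝ) * (∫ τ, b τ) ^ (n - 1))) :=
  stmt_7_general b hnn hint hb K ρ hquasi
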